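/- arXiv:1502.00699 — 2 statements merged into one kernel-verified Lean document; each statement's English description precedes it below -/
import Mathlib

section
/- (Gale's lemma.) Let n, k, ℓ be positive integers with d = n − 2k − 2ℓ + 1 ≥ 1. Then there exists a mapping f : [n] → S^{d−1} such that for every open hemisphere H of S^{d−1} there is a stable (k+ℓ)-element subset S of [n] with f(S) ⊆ H. -/
open scoped RealInnerProductSpace

/-- A subset of `Fin n` is *stable* (viewing `Fin n` as `[n]` arranged in a cycle)
if it contains no two cyclically consecutive elements. -/
def IsStable {n : ℕ} (S : Finset (Fin n)) : Prop :=
  ∀ i ∈ S, ∀ j ∈ S, ((i : ℕ) + 1) % n ≠ (j : ℕ)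

/-- `d = n - 2k - 2ℓ + 1`. -/
def dval (n k ℓ : ℕ) : ℕ := n - 2 * k - 2 * ℓ + 1

/-!
Take `f i` to be the normalised alternating moment vector `(-1)^i (1, i, …, i^(d-1))`. Then
`⟪x, f i⟫` has the sign of `q i = (-1)^i p(i)`, where `p ≠ 0` is the polynomial with coefficient
vector `x`, of degree `< d`. After a perturbation of `p` that only destroys positive values of `q`,
`p` vanishes at none of `0, …, n-1`; then every `i < n - 1` with `q i` and `q (i+1)` of the same
sign is a sign change of `p` in `(i, i+1)`, so there are at most `d - 1` of them. Going once around
the cycle, `q` therefore changes sign at least `n - d = 2(k+ℓ) - 1` times, hence at least `2(k+ℓ)`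
times (ascents and descents are equinumerous), and the at least `k+ℓ` points where the positive
set of `q` is entered form a stable set.
-/

open Polynomial Finset Filter Topology

lemma coe_finRotate_eq_mod {n : ℕ} (i : Fin n) : (finRotate n i : ℕ) = ((i : ℕ) + 1) % n := by
  obtain ⟨n, rfl⟩ := Nat.exists_eq_succ_of_ne_zero i.pos.ne'
  rw [finRotate_apply, Fin.val_add, Fin.val_one', Nat.add_mod_mod]

lemma isStable_iff_finRotate {n : ℕ} {S : Finset (Fin n)} :
    IsStable S ↔ ∀ i ∈ S, finRotate n i ∉ S := by
  simp only [IsStable, ← coe_finRotate_eq_mod, ne_eq, ← Fin.ext_iff]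
  grind

lemma Polynomial.exists_mem_Ioo_isRoot_of_eval_mul_neg (p : ℝ[X]) {a b : ℝ} (hab : a ≤ b)
    (h : p.eval a * p.eval b < 0) : ∃ r ∈ Set.Ioo a b, p.IsRoot r := by
  have hc : ContinuousOn (fun t => p.eval t) (Set.Icc a b) := p.continuous.continuousOn
  rcases mul_neg_iff.1 h with ⟨ha, hb⟩ | ⟨ha, hb⟩
  · exact intermediate_value_Ioo' hab hc ⟨hb, ha⟩
  · exact intermediate_value_Ioo hab hc ⟨ha, hb⟩

lemma Polynomial.card_le_natDegree_of_eval_mul_neg (p : ℝ[X]) (s : Finset ℕ)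
    (hs : ∀ i ∈ s, p.eval (i : ℝ) * p.eval ((i : ℝ) + 1) < 0) : #s ≤ p.natDegree := by
  choose! r hr hroot using fun (i : ℕ) (hi : i ∈ s) =>
    p.exists_mem_Ioo_isRoot_of_eval_mul_neg (by linarith : (i : ℝ) ≤ i + 1) (hs i hi)
  calc #s ≤ #p.roots.toFinset := by
        refine card_le_card_of_injOn r (fun i hi => ?_) (fun i hi j hj hij => ?_)
        · have hp : p ≠ 0 := by rintro rfl; simpa using hs i hi
          simpa [mem_roots hp] using hroot i hi
        · have h1 := hr i hi
          have h2 := hr j hj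
          rw [hij] at h1
          have : (i : ℝ) < j + 1 := h1.1.trans h2.2
          have : (j : ℝ) < i + 1 := h2.1.trans h1.2
          norm_cast at *
          omega
    _ ≤ p.natDegree := (Multiset.toFinset_card_le _).trans (card_roots' p)

lemma Polynomial.exists_natDegree_le_eval_ne_zero {ι : Type*} (p : ℝ[X]) (hp : p ≠ 0)
    (s : Finset ι) {x : ι → ℝ} (hx : Set.InjOn x s) (w : ι → ℝ) (hw : ∀ i ∈ s, w i ≠ 0) :
    ∃ p' : ℝ[X], p'.natDegree ≤ p.natDegree ∧
      ∀ i ∈ s, p'.eval (x i) ≠ 0 ∧ (0 < w i * p'.eval (x i) → 0 < w i * p.eval (x i)) := by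
  classical
  set Z := s.filter fun i => p.eval (x i) = 0
  have hxZ : Set.InjOn x Z := hx.mono (filter_subset _ _)
  have hZ : #Z ≤ p.natDegree := by
    rw [← card_image_of_injOn hxZ]
    refine card_le_degree_of_subset_roots fun t ht => ?_
    obtain ⟨i, hi, rfl⟩ := mem_image.1 ht
    exact (mem_roots hp).2 (mem_filter.1 hi).2
  -- `h` pushes `p + ε h` to the wrong side of `0` at the zeros of `p`; elsewhere a small `ε`
  -- keeps the sign of `p`.
  set h := Lagrange.interpolate Z x fun i => -w i
  have hdeg : h.natDegree ≤ p.natDegree :=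
    natDegree_le_of_degree_le <|
      (Lagrange.degree_interpolate_lt _ hxZ).le.trans (by exact_mod_cast hZ)
  have hevent : ∀ i ∈ s, ∀ᶠ ε in 𝓝[>] (0 : ℝ), (p + C ε * h).eval (x i) ≠ 0 ∧
      (0 < w i * (p + C ε * h).eval (x i) → 0 < w i * p.eval (x i)) := by
    intro i hi
    simp only [eval_add, eval_mul, eval_C]
    by_cases hpi : p.eval (x i) = 0
    · rw [Lagrange.eval_interpolate_at_node _ hxZ (mem_filter.2 ⟨hi, hpi⟩), hpi]
      filter_upwards [self_mem_nhdsWithin] with ε (hε : 0 < ε)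
      have : 0 < ε * w i ^ 2 := by have := hw i hi; positivity
      constructor <;> intro <;> nlinarith
    · have hlim : Tendsto (fun ε : ℝ => (p.eval (x i) + ε * h.eval (x i)) * p.eval (x i))
          (𝓝 0) (𝓝 (p.eval (x i) * p.eval (x i))) := by
        refine Continuous.tendsto' (by fun_prop) _ _ (by simp)
      filter_upwards [nhdsWithin_le_nhds (hlim.eventually (lt_mem_nhds (mul_self_pos.2 hpi)))]
        with ε hε
      generalize p.eval (x i) + ε * h.eval (x i) = b at hε ⊢
      refine ⟨fun h0 => by simp [h0] at hε, fun hpos => ?_⟩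
      nlinarith [mul_pos hpos hε, sq_nonneg b]
  obtain ⟨ε, hε⟩ := ((eventually_all_finset s).2 hevent).exists
  exact ⟨p + C ε * h,
    natDegree_add_le_of_degree_le le_rfl ((natDegree_C_mul_le _ _).trans hdeg), hε⟩

lemma two_mul_card_ascents_add_card_agree {n : ℕ} (g : Fin n → Prop) [DecidablePred g] :
    2 * #{i | ¬g i ∧ g (finRotate n i)} + #{i | g i ↔ g (finRotate n i)} = n := by
  -- Rotation invariance of `∑ i, [g i]`: ascents and descents of a cyclic sequence are equinumerous.
  have hrot : ∑ i, (if g (finRotate n i) then 1 else 0) = ∑ i, (if g i then 1 else 0) :=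
    Equiv.sum_comp (finRotate n) fun i => if g i then 1 else 0
  have hpt : ∀ i, 2 * (if ¬g i ∧ g (finRotate n i) then 1 else 0) +
      (if g i ↔ g (finRotate n i) then 1 else 0) + (if g i then 1 else 0) =
      1 + (if g (finRotate n i) then 1 else 0) := by
    intro i
    generalize finRotate n i = j
    by_cases g i <;> by_cases g j <;> simp [*]
  have := Finset.sum_congr rfl fun i (_ : i ∈ univ) => hpt i
  simp only [sum_add_distrib, ← mul_sum, hrot, sum_const, card_univ, Fintype.card_fin,
    smul_eq_mul, mul_one] at this
  simp only [card_filter]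
  omega

lemma exists_isStable_of_card_agree_le {n : ℕ} (g : Fin n → Prop) [DecidablePred g] (m : ℕ)
    (h : #{i | g i ↔ g (finRotate n i)} + 2 * m ≤ n + 1) :
    ∃ S : Finset (Fin n), #S = m ∧ IsStable S ∧ ∀ i ∈ S, g i := by
  have hcount := two_mul_card_ascents_add_card_agree g
  set U : Finset (Fin n) := {i | ¬g i ∧ g (finRotate n i)}
  have hU : m ≤ #(U.map (finRotate n).toEmbedding) := by
    rw [card_map]
    omega
  obtain ⟨S, hSU, hS⟩ := exists_subset_card_eq hU
  have hSg : ∀ j ∈ S, g j ∧ ¬g ((finRotate n).symm j) := by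
    intro j hj
    obtain ⟨i, hi, rfl⟩ := mem_map.1 (hSU hj)
    rw [Equiv.toEmbedding_apply, Equiv.symm_apply_apply]
    exact (mem_filter.1 hi).2.symm
  refine ⟨S, hS, isStable_iff_finRotate.2 fun i hi hi' => ?_, fun i hi => (hSg i hi).1⟩
  have := (hSg _ hi').2
  rw [Equiv.symm_apply_apply] at this
  exact this (hSg i hi).1

lemma mul_neg_of_pos_iff_pos_neg {α : Type*} [Ring α] [LinearOrder α] [IsStrictOrderedRing α]
    {u v : α} (hu : u ≠ 0) (hv : v ≠ 0) (h : 0 < u ↔ 0 < -v) : u * v < 0 := by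
  rcases hu.lt_or_gt with hu | hu
  · exact mul_neg_of_neg_of_pos hu (by_contra fun hv' => hu.not_gt (h.2 (by
      rw [neg_pos]; exact lt_of_le_of_ne (not_lt.1 hv') hv)))
  · exact mul_neg_of_pos_of_neg hu (neg_pos.1 (h.1 hu))

lemma Polynomial.card_sign_agree_le_natDegree_add_one (p : ℝ[X]) (n : ℕ)
    (hp : ∀ i < n, p.eval (i : ℝ) ≠ 0) :
    #{i : Fin n | 0 < (-1) ^ (i : ℕ) * p.eval (i : ℝ) ↔
      0 < (-1) ^ (finRotate n i : ℕ) * p.eval (finRotate n i : ℝ)} ≤ p.natDegree + 1 := by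
  set A : Finset (Fin n) := {i | 0 < (-1) ^ (i : ℕ) * p.eval (i : ℝ) ↔
      0 < (-1) ^ (finRotate n i : ℕ) * p.eval (finRotate n i : ℝ)}
  have hlast : #(A.filter fun i : Fin n => (i : ℕ) + 1 = n) ≤ 1 :=
    card_le_one.2 fun a ha b hb => Fin.ext (by simp only [mem_filter] at ha hb; omega)
  have hinner : #(A.filter fun i : Fin n => ¬(i : ℕ) + 1 = n) ≤ p.natDegree := by
    rw [← card_map Fin.valEmbedding]
    refine p.card_le_natDegree_of_eval_mul_neg _ (forall_mem_map.2 fun i hi => ?_)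
    obtain ⟨hagree, hin⟩ := mem_filter.1 hi
    replace hagree := (mem_filter.1 hagree).2
    rw [coe_finRotate_eq_mod, Nat.mod_eq_of_lt (by omega), pow_succ, mul_neg_one, neg_mul]
      at hagree
    have hsign : ((-1 : ℝ) ^ (i : ℕ)) * (-1) ^ (i : ℕ) = 1 := by rw [← mul_pow]; norm_num
    have := mul_neg_of_pos_iff_pos_neg (by simpa using hp i i.isLt)
      (by simpa using hp (i + 1) (by omega)) hagree
    push_cast at this ⊢
    rwa [mul_mul_mul_comm, hsign, one_mul] at this
  rw [← card_filter_add_card_filter_not (s := A) (p := fun i : Fin n => (i : ℕ) + 1 = n)]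
  omega

theorem Polynomial.exists_isStable_forall_pos (p : ℝ[X]) (hp : p ≠ 0) {n m : ℕ}
    (h : p.natDegree + 2 * m ≤ n) :
    ∃ S : Finset (Fin n), #S = m ∧ IsStable S ∧ ∀ i ∈ S, 0 < (-1) ^ (i : ℕ) * p.eval (i : ℝ) := by
  obtain ⟨p', hdeg, hp'⟩ := p.exists_natDegree_le_eval_ne_zero hp (range n)
    Nat.cast_injective.injOn (fun i => (-1) ^ i) fun i _ => by simp
  have hagree := p'.card_sign_agree_le_natDegree_add_one n fun i hi => (hp' i (mem_range.2 hi)).1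
  obtain ⟨S, hS, hstable, hpos⟩ := exists_isStable_of_card_agree_le
    (fun i : Fin n => 0 < (-1) ^ (i : ℕ) * p'.eval (i : ℝ)) m (by omega)
  exact ⟨S, hS, hstable, fun i hi => (hp' i (mem_range.2 i.isLt)).2 (hpos i hi)⟩

def altMomentVector (d t : ℕ) : EuclideanSpace ℝ (Fin d) :=
  WithLp.toLp 2 fun j => (-1) ^ t * (t : ℝ) ^ (j : ℕ)

lemma inner_altMomentVector {d : ℕ} (x : EuclideanSpace ℝ (Fin d)) (t : ℕ) :
    ⟪x, altMomentVector d t⟫ = (-1) ^ t * (ofFn d x.ofLp).eval (t : ℝ) := by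
  simp only [altMomentVector, PiLp.inner_apply, ofFn_eq_sum_monomial, eval_finsetSum,
    eval_monomial, mul_sum, RCLike.inner_apply, conj_trivial]
  exact sum_congr rfl fun j _ => by ring

lemma altMomentVector_ne_zero {d : ℕ} (hd : 0 < d) (t : ℕ) : altMomentVector d t ≠ 0 := by
  intro h
  have := congrArg (fun v : EuclideanSpace ℝ (Fin d) => v ⟨0, hd⟩) h
  simp [altMomentVector] at this

theorem gale_lemma_general (n k ℓ : ℕ) (hd : 2 * k + 2 * ℓ ≤ n) :
    ∃ f : Fin n → EuclideanSpace ℝ (Fin (dval n k ℓ)),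
      (∀ i, f i ∈ Metric.sphere (0 : EuclideanSpace ℝ (Fin (dval n k ℓ))) 1) ∧
      ∀ x ∈ Metric.sphere (0 : EuclideanSpace ℝ (Fin (dval n k ℓ))) 1,
        ∃ S : Finset (Fin n), S.card = k + ℓ ∧ IsStable S ∧
          ∀ i ∈ S, 0 < ⟪x, f i⟫ := by
  have hdval : dval n k ℓ = n - 2 * (k + ℓ) + 1 := by unfold dval; omega
  have hv := altMomentVector_ne_zero (d := dval n k ℓ) (by omega)
  refine ⟨fun i => NormedSpace.normalize (altMomentVector _ i),
    fun i => by simpa using NormedSpace.norm_normalize_eq_one_iff.2 (hv i), fun x hx => ?_⟩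
  have hx0 : ofFn (dval n k ℓ) x.ofLp ≠ 0 := by
    refine (map_ne_zero_iff _ (injective_ofFn _)).2 ((WithLp.ofLp_eq_zero (p := 2)).not.2 ?_)
    rintro rfl
    simp at hx
  have hdeg := ofFn_natDegree_lt (by omega) x.ofLp
  obtain ⟨S, hS, hstable, hpos⟩ :=
    (ofFn _ x.ofLp).exists_isStable_forall_pos hx0 (n := n) (m := k + ℓ) (by omega)
  refine ⟨S, hS, hstable, fun i hi => ?_⟩
  dsimp only
  rw [NormedSpace.normalize, real_inner_smul_right, inner_altMomentVector]
  exact mul_pos (inv_pos.2 (norm_pos_iff.2 (hv i))) (hpos i hi)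

/-- **Gale's lemma.**  Let `n, k, ℓ` be positive integers with
`d = n - 2k - 2ℓ + 1 ≥ 1` (i.e. `2k + 2ℓ ≤ n`).  Then there is a map
`f : [n] → S^{d-1}` such that every open hemisphere of `S^{d-1}` contains the image of a
stable `(k+ℓ)`-element subset of `[n]`. -/
theorem gale_lemma (n k ℓ : ℕ) (hk : 1 ≤ k) (hℓ : 1 ≤ ℓ) (hd : 2 * k + 2 * ℓ ≤ n) :
    ∃ f : Fin n → EuclideanSpace ℝ (Fin (dval n k ℓ)),
      (∀ i, f i ∈ Metric.sphere (0 : EuclideanSpace ℝ (Fin (dval n k ℓ))) 1) ∧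
      ∀ x ∈ Metric.sphere (0 : EuclideanSpace ℝ (Fin (dval n k ℓ))) 1,
        ∃ S : Finset (Fin n), S.card = k + ℓ ∧ IsStable S ∧
          ∀ i ∈ S, 0 < ⟪x, f i⟫ :=
  gale_lemma_general n k ℓ hd
end

section
/- Let t₁, t₂ ≥ 1 and d ≥ 2 be integers and let p ∈ (0,1) be real. Then C((t₁+1)d, t₁+1) · (1−p)^{t₂} < C(t₁d, t₁) · e^{1 + ln d − p·t₂}. Consequently, if p·t₂ > 1 + ln d, then C((t₁+1)d, t₁+1)·C(t₂d, t₂)·(1−p)^{(t₁+1)t₂} < C(t₁d, t₁)·C(t₂d, t₂)·(1−p)^{t₁t₂}; in particular, for any integer t ≥ 1 with p·t > 1 + ln d, the function g(t₁,t₂) = C(t₁d, t₁)·C(t₂d, t₂)·(1−p)^{t₁t₂} attains its maximum over integers t₁, t₂ ≥ t at t₁ = t₂ = t. -/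
open Nat

lemma asc_pos (n k : ℕ) (hn : 0 < n) : 0 < n.ascFactorial k := by
  induction k with
  | zero => simp
  | succ k ih => rw [Nat.ascFactorial_succ]; positivity

lemma asc_mul_pow_le {a b c e : ℕ} (hce : c ≤ e) (h : a * c ≤ b * e) (k : ℕ) :
    a.ascFactorial k * c ^ k ≤ b.ascFactorial k * e ^ k := by
  induction k with
  | zero => simp
  | succ k ih =>
    rw [Nat.ascFactorial_succ, Nat.ascFactorial_succ, pow_succ, pow_succ]
    calc (a + k) * a.ascFactorial k * (c ^ k * c)
        = ((a+k)*c) * (a.ascFactorial k * c ^ k) := by ring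
      _ ≤ ((b+k)*e) * (b.ascFactorial k * e ^ k) := by
          apply Nat.mul_le_mul _ ih
          have h1 : (a+k)*c = a*c + k*c := by ring
          have h2 : (b+k)*e = b*e + k*e := by ring
          rw [h1, h2]
          exact Nat.add_le_add h (Nat.mul_le_mul_left k hce)
      _ = (b + k) * b.ascFactorial k * (e ^ k * e) := by ring

lemma key_identity (t d : ℕ) (ht : 1 ≤ t) (hd : 2 ≤ d) :
    ((t+1)*d).choose (t+1) * (t*d - t + 1).ascFactorial (d-1)
      = (t*d).choose t * d * (t*d + 1).ascFactorial (d-1) := by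
  have htd : t ≤ t * d := Nat.le_mul_of_pos_right t (by omega)
  have h1 : t + 1 ≤ (t+1)*d := Nat.le_mul_of_pos_right (t+1) (by omega)
  have F1 : ((t+1)*d).choose (t+1) * (t+1)! * ((t+1)*d - (t+1))! = ((t+1)*d)! :=
    Nat.choose_mul_factorial_mul_factorial h1
  have F2 : (t*d).choose t * t ! * (t*d - t)! = (t*d)! :=
    Nat.choose_mul_factorial_mul_factorial htd
  have F3 : (t*d - t)! * (t*d - t + 1).ascFactorial (d-1) = (t*d - t + (d-1))! :=
    Nat.factorial_mul_ascFactorial _ _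
  have F4 : (t*d)! * (t*d + 1).ascFactorial d = (t*d + d)! :=
    Nat.factorial_mul_ascFactorial _ _
  have F5 : (t*d + 1).ascFactorial d = (t*d + d) * (t*d + 1).ascFactorial (d-1) := by
    obtain ⟨c, rfl⟩ : ∃ c, d = c + 1 := ⟨d-1, by omega⟩
    rw [show c+1-1 = c by omega, Nat.ascFactorial_succ,
      show t*(c+1)+1+c = t*(c+1)+(c+1) by omega]
  have E1 : (t+1)*d = t*d + d := by ring
  have E2 : (t+1)*d - (t+1) = t*d - t + (d-1) := by rw [E1]; omega
  have hpos : 0 < (t+1)! * (t*d - t)! := Nat.mul_pos (Nat.factorial_pos _) (Nat.factorial_pos _)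
  apply Nat.eq_of_mul_eq_mul_right hpos
  calc ((t+1)*d).choose (t+1) * (t*d - t + 1).ascFactorial (d-1) * ((t+1)! * (t*d - t)!)
      = ((t+1)*d).choose (t+1) * (t+1)! * ((t*d - t)! * (t*d - t + 1).ascFactorial (d-1)) := by
        ring
    _ = ((t+1)*d).choose (t+1) * (t+1)! * ((t+1)*d - (t+1))! := by rw [F3, E2]
    _ = ((t+1)*d)! := F1
    _ = (t*d)! * (t*d + 1).ascFactorial d := by rw [F4, E1]
    _ = (t*d).choose t * t ! * (t*d - t)! * ((t*d + d) * (t*d + 1).ascFactorial (d-1)) := by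
        rw [F2, F5]
    _ = (t*d).choose t * d * (t*d + 1).ascFactorial (d-1) * ((t+1) * t ! * (t*d - t)!) := by
        rw [show t*d + d = d * (t+1) by ring]; ring
    _ = (t*d).choose t * d * (t*d + 1).ascFactorial (d-1) * ((t+1)! * (t*d - t)!) := by
        rw [Nat.factorial_succ]

lemma lemA (t d : ℕ) (ht : 1 ≤ t) (hd : 2 ≤ d) :
    ((t+1)*d).choose (t+1) * (d-1)^(d-1) ≤ (t*d).choose t * d ^ d := by
  have hA : 0 < (t*d - t + 1).ascFactorial (d-1) := asc_pos _ _ (Nat.succ_pos _)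
  have h1 : (t*d+1).ascFactorial (d-1) * (d-1)^(d-1)
      ≤ (t*d - t + 1).ascFactorial (d-1) * d^(d-1) := by
    apply asc_mul_pow_le (Nat.sub_le d 1)
    obtain ⟨c, rfl⟩ : ∃ c, d = c + 2 := ⟨d-2, by omega⟩
    have e0 : t*(c+2) = t*c + 2*t := by ring
    have e1 : t*(c+2) - t + 1 = t*c + t + 1 := by omega
    have e2 : (c+2) - 1 = c + 1 := by omega
    rw [e1, e2, e0]
    nlinarith [Nat.zero_le (t*c), ht]
  have hmul : ((t+1)*d).choose (t+1) * (d-1)^(d-1) * (t*d - t + 1).ascFactorial (d-1)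
      ≤ (t*d).choose t * d ^ d * (t*d-t+1).ascFactorial (d-1) := by
    calc ((t+1)*d).choose (t+1) * (d-1)^(d-1) * (t*d - t + 1).ascFactorial (d-1)
        = ((t+1)*d).choose (t+1) * (t*d - t + 1).ascFactorial (d-1) * (d-1)^(d-1) := by ring
      _ = (t*d).choose t * d * ((t*d + 1).ascFactorial (d-1) * (d-1)^(d-1)) := by
          rw [key_identity t d ht hd]; ring
      _ ≤ (t*d).choose t * d * ((t*d - t + 1).ascFactorial (d-1) * d^(d-1)) :=
          Nat.mul_le_mul_left _ h1
      _ = (t*d).choose t * d ^ d * (t*d-t+1).ascFactorial (d-1) := by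
          rw [show d^d = d^(d-1)*d by rw [← pow_succ]; congr 1; omega]
          ring
  exact Nat.le_of_mul_le_mul_right hmul hA

lemma pow_d_le (d : ℕ) (hd : 2 ≤ d) :
    (d:ℝ)^d ≤ Real.exp 1 * d * ((d:ℝ)-1)^(d-1) := by
  obtain ⟨m, rfl⟩ : ∃ m, d = m + 1 := ⟨d-1, by omega⟩
  have hm : 1 ≤ m := by omega
  have hm0 : (0:ℝ) < m := by exact_mod_cast hm
  have key : ((m:ℝ)+1)^m ≤ Real.exp 1 * (m:ℝ)^m := by
    have h1 : (m:ℝ)+1 = m * (1 + 1/m) := by field_simp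
    have h2 : (1 + 1/(m:ℝ)) ≤ Real.exp (1/m) := by
      have := Real.add_one_le_exp (1/(m:ℝ)); linarith
    have h3 : (1 + 1/(m:ℝ))^m ≤ Real.exp (1/m) ^ m := by
      apply pow_le_pow_left₀ (by positivity) h2
    have h4 : Real.exp (1/(m:ℝ)) ^ m = Real.exp 1 := by
      rw [← Real.exp_nat_mul]
      congr 1
      field_simp
    calc ((m:ℝ)+1)^m = (m:ℝ)^m * (1+1/m)^m := by rw [h1, mul_pow]
      _ ≤ (m:ℝ)^m * Real.exp 1 := by
          rw [← h4]; exact mul_le_mul_of_nonneg_left h3 (by positivity)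
      _ = Real.exp 1 * (m:ℝ)^m := by ring
  have e1 : ((m:ℕ)+1 : ℝ) - 1 = (m:ℝ) := by push_cast; ring
  have e2 : m + 1 - 1 = m := by omega
  rw [e2]
  push_cast
  rw [show (((m:ℝ))+1)^(m+1) = ((m:ℝ)+1)^m * ((m:ℝ)+1) by rw [pow_succ]]
  rw [show (m:ℝ)+1-1 = (m:ℝ) by ring]
  calc ((m:ℝ)+1)^m * ((m:ℝ)+1) ≤ (Real.exp 1 * (m:ℝ)^m) * ((m:ℝ)+1) := by
        apply mul_le_mul_of_nonneg_right key (by positivity)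
    _ = Real.exp 1 * ((m:ℝ)+1) * (m:ℝ)^m := by ring

lemma lemA_real (t d : ℕ) (ht : 1 ≤ t) (hd : 2 ≤ d) :
    ((((t+1)*d).choose (t+1) : ℕ) : ℝ) ≤ Real.exp (1 + Real.log d) * ((t*d).choose t : ℕ) := by
  have hnat := lemA t d ht hd
  have hcast : (((((t+1)*d).choose (t+1)) : ℕ) : ℝ) * ((d:ℝ)-1)^(d-1)
      ≤ (((t*d).choose t : ℕ) : ℝ) * (d:ℝ)^d := by
    have h := (Nat.cast_le (α := ℝ)).mpr hnat
    push_cast [Nat.cast_sub (show 1 ≤ d by omega)] at h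
    convert h using 2
  have hd1 : (0:ℝ) < (d:ℝ) - 1 := by
    have : (2:ℝ) ≤ d := by exact_mod_cast hd
    linarith
  have hpow : (0:ℝ) < ((d:ℝ)-1)^(d-1) := by positivity
  have hC : (0:ℝ) ≤ (((t*d).choose t : ℕ) : ℝ) := by positivity
  have h2 : (((t*d).choose t : ℕ) : ℝ) * (d:ℝ)^d
      ≤ (((t*d).choose t : ℕ) : ℝ) * (Real.exp 1 * d * ((d:ℝ)-1)^(d-1)) :=
    mul_le_mul_of_nonneg_left (pow_d_le d hd) hC
  have hexp : Real.exp (1 + Real.log d) = Real.exp 1 * d := by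
    rw [Real.exp_add, Real.exp_log (by positivity)]
  have h3 : ((((t+1)*d).choose (t+1) : ℕ) : ℝ) * ((d:ℝ)-1)^(d-1)
      ≤ (Real.exp (1 + Real.log d) * (((t*d).choose t : ℕ) : ℝ)) * ((d:ℝ)-1)^(d-1) := by
    rw [hexp]
    calc ((((t+1)*d).choose (t+1) : ℕ) : ℝ) * ((d:ℝ)-1)^(d-1)
        ≤ (((t*d).choose t : ℕ) : ℝ) * (Real.exp 1 * d * ((d:ℝ)-1)^(d-1)) := hcast.trans h2
      _ = (Real.exp 1 * d * (((t*d).choose t : ℕ) : ℝ)) * ((d:ℝ)-1)^(d-1) := by ring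
  exact le_of_mul_le_mul_right h3 hpow

lemma part1 (t₁ t₂ d : ℕ) (ht₁ : 1 ≤ t₁) (ht₂ : 1 ≤ t₂) (hd : 2 ≤ d)
    (p : ℝ) (hp0 : 0 < p) (hp1 : p < 1) :
    ((((t₁ + 1) * d).choose (t₁ + 1) : ℕ) : ℝ) * (1 - p) ^ t₂ <
      (((t₁ * d).choose t₁ : ℕ) : ℝ) * Real.exp (1 + Real.log d - p * t₂) := by
  have hb : (1-p)^t₂ < Real.exp (-(p*t₂)) := by
    have h1 : (1-p) < Real.exp (-p) := by
      have := Real.add_one_lt_exp (show (-p) ≠ 0 by intro h; simp at h; linarith)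
      linarith
    have h2 : (1-p)^t₂ < Real.exp (-p) ^ t₂ :=
      pow_lt_pow_left₀ h1 (by linarith) (by omega)
    calc (1-p)^t₂ < Real.exp (-p) ^ t₂ := h2
      _ = Real.exp (-(p*t₂)) := by rw [← Real.exp_nat_mul]; ring_nf
  have hC0 : (0:ℝ) < (((t₁*d).choose t₁ : ℕ) : ℝ) := by
    have : 0 < (t₁*d).choose t₁ := Nat.choose_pos (Nat.le_mul_of_pos_right t₁ (by omega))
    exact_mod_cast this
  have hstep : ((((t₁ + 1) * d).choose (t₁ + 1) : ℕ) : ℝ) * (1 - p) ^ t₂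
      ≤ (Real.exp (1 + Real.log d) * (((t₁*d).choose t₁ : ℕ) : ℝ)) * (1 - p) ^ t₂ :=
    mul_le_mul_of_nonneg_right (lemA_real t₁ d ht₁ hd) (pow_nonneg (by linarith) _)
  have hstep2 : (Real.exp (1 + Real.log d) * (((t₁*d).choose t₁ : ℕ) : ℝ)) * (1 - p) ^ t₂
      < (Real.exp (1 + Real.log d) * (((t₁*d).choose t₁ : ℕ) : ℝ)) * Real.exp (-(p*t₂)) :=
    mul_lt_mul_of_pos_left hb (mul_pos (Real.exp_pos _) hC0)
  calc ((((t₁ + 1) * d).choose (t₁ + 1) : ℕ) : ℝ) * (1 - p) ^ t₂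
      ≤ _ := hstep
    _ < _ := hstep2
    _ = (((t₁ * d).choose t₁ : ℕ) : ℝ) * Real.exp (1 + Real.log d - p * t₂) := by
        rw [Real.exp_sub, Real.exp_add, Real.exp_neg]
        ring

lemma part2 (t₁ t₂ d : ℕ) (ht₁ : 1 ≤ t₁) (ht₂ : 1 ≤ t₂) (hd : 2 ≤ d)
    (p : ℝ) (hp0 : 0 < p) (hp1 : p < 1) (hgt : p * t₂ > 1 + Real.log d) :
    ((((t₁ + 1) * d).choose (t₁ + 1) : ℕ) : ℝ) * (((t₂ * d).choose t₂ : ℕ) : ℝ) *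
        (1 - p) ^ ((t₁ + 1) * t₂) <
      (((t₁ * d).choose t₁ : ℕ) : ℝ) * (((t₂ * d).choose t₂ : ℕ) : ℝ) * (1 - p) ^ (t₁ * t₂) := by
  have h1 := part1 t₁ t₂ d ht₁ ht₂ hd p hp0 hp1
  have hexp : Real.exp (1 + Real.log d - p * t₂) < 1 := by
    have := Real.exp_lt_exp.mpr (show 1 + Real.log d - p*t₂ < 0 by linarith)
    simpa using this
  have hC0 : (0:ℝ) < (((t₁*d).choose t₁ : ℕ) : ℝ) := by
    have : 0 < (t₁*d).choose t₁ := Nat.choose_pos (Nat.le_mul_of_pos_right t₁ (by omega))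
    exact_mod_cast this
  have key : ((((t₁ + 1) * d).choose (t₁ + 1) : ℕ) : ℝ) * (1 - p) ^ t₂
      < (((t₁ * d).choose t₁ : ℕ) : ℝ) := by
    calc ((((t₁ + 1) * d).choose (t₁ + 1) : ℕ) : ℝ) * (1 - p) ^ t₂
        < (((t₁ * d).choose t₁ : ℕ) : ℝ) * Real.exp (1 + Real.log d - p * t₂) := h1
      _ < (((t₁ * d).choose t₁ : ℕ) : ℝ) * 1 := mul_lt_mul_of_pos_left hexp hC0
      _ = _ := mul_one _
  have hM : (0:ℝ) < (((t₂*d).choose t₂ : ℕ) : ℝ) * (1 - p) ^ (t₁ * t₂) := by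
    have : 0 < (t₂*d).choose t₂ := Nat.choose_pos (Nat.le_mul_of_pos_right t₂ (by omega))
    have h2 : (0:ℝ) < (((t₂*d).choose t₂ : ℕ) : ℝ) := by exact_mod_cast this
    have h3 : (0:ℝ) < (1-p)^(t₁*t₂) := pow_pos (by linarith) _
    positivity
  calc ((((t₁ + 1) * d).choose (t₁ + 1) : ℕ) : ℝ) * (((t₂ * d).choose t₂ : ℕ) : ℝ) *
        (1 - p) ^ ((t₁ + 1) * t₂)
      = (((((t₁ + 1) * d).choose (t₁ + 1) : ℕ) : ℝ) * (1 - p) ^ t₂) *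
        ((((t₂ * d).choose t₂ : ℕ) : ℝ) * (1 - p) ^ (t₁ * t₂)) := by
        rw [show (t₁ + 1) * t₂ = t₁ * t₂ + t₂ by ring, pow_add]; ring
    _ < (((t₁ * d).choose t₁ : ℕ) : ℝ) *
        ((((t₂ * d).choose t₂ : ℕ) : ℝ) * (1 - p) ^ (t₁ * t₂)) :=
        mul_lt_mul_of_pos_right key hM
    _ = _ := by ring

lemma g_anti (d : ℕ) (hd : 2 ≤ d) (p : ℝ) (hp0 : 0 < p) (hp1 : p < 1)
    (b : ℕ) (hb : 1 ≤ b) (hgt : p * b > 1 + Real.log d) (a : ℕ) (ha : 1 ≤ a) :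
    ∀ k : ℕ, (((a + k) * d).choose (a + k) : ℝ) * (((b * d).choose b : ℕ) : ℝ) *
        (1 - p) ^ ((a + k) * b) ≤
      (((a * d).choose a : ℕ) : ℝ) * (((b * d).choose b : ℕ) : ℝ) * (1 - p) ^ (a * b) := by
  intro k
  induction k with
  | zero => simp
  | succ k ih =>
    have h := part2 (a + k) b d (by omega) hb hd p hp0 hp1 hgt
    have e : a + (k + 1) = (a + k) + 1 := by omega
    rw [e]
    exact le_trans (le_of_lt h) ih

/-- **The monotonicity computation in the proof of Theorem 1.**
For integers `t₁, t₂ ≥ 1`, `d ≥ 2` and real `p ∈ (0,1)`: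
`C((t₁+1)d, t₁+1)·(1-p)^{t₂} < C(t₁d, t₁)·e^{1 + ln d - p t₂}`.
Consequently, if `p·t₂ > 1 + ln d` then
`g(t₁+1, t₂) < g(t₁, t₂)` where `g(t₁,t₂) = C(t₁d,t₁)·C(t₂d,t₂)·(1-p)^{t₁t₂}`;
in particular, for an integer `t ≥ 1` with `p·t > 1 + ln d`, the function `g`
attains its maximum over integers `t₁, t₂ ≥ t` at `t₁ = t₂ = t`. -/
theorem binomial_ratio_bound (t₁ t₂ d : ℕ) (ht₁ : 1 ≤ t₁) (ht₂ : 1 ≤ t₂) (hd : 2 ≤ d)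
    (p : ℝ) (hp0 : 0 < p) (hp1 : p < 1) :
    ((((t₁ + 1) * d).choose (t₁ + 1) : ℝ) * (1 - p) ^ t₂ <
      ((t₁ * d).choose t₁ : ℝ) * Real.exp (1 + Real.log d - p * t₂)) ∧
    (p * t₂ > 1 + Real.log d →
      (((t₁ + 1) * d).choose (t₁ + 1) : ℝ) * ((t₂ * d).choose t₂ : ℝ) *
          (1 - p) ^ ((t₁ + 1) * t₂) <
        ((t₁ * d).choose t₁ : ℝ) * ((t₂ * d).choose t₂ : ℝ) * (1 - p) ^ (t₁ * t₂)) ∧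
    (∀ t : ℕ, 1 ≤ t → p * t > 1 + Real.log d →
      ∀ s₁ s₂ : ℕ, t ≤ s₁ → t ≤ s₂ →
        ((s₁ * d).choose s₁ : ℝ) * ((s₂ * d).choose s₂ : ℝ) * (1 - p) ^ (s₁ * s₂) ≤
          ((t * d).choose t : ℝ) * ((t * d).choose t : ℝ) * (1 - p) ^ (t * t)) := by
  refine ⟨part1 t₁ t₂ d ht₁ ht₂ hd p hp0 hp1,
    fun hgt => part2 t₁ t₂ d ht₁ ht₂ hd p hp0 hp1 hgt, ?_⟩
  intro t ht hgt s₁ s₂ hs₁ hs₂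
  have hps₂ : p * s₂ > 1 + Real.log d := by
    have : (t:ℝ) ≤ s₂ := by exact_mod_cast hs₂
    nlinarith
  have step1 : ((s₁ * d).choose s₁ : ℝ) * ((s₂ * d).choose s₂ : ℝ) * (1 - p) ^ (s₁ * s₂) ≤
      ((t * d).choose t : ℝ) * ((s₂ * d).choose s₂ : ℝ) * (1 - p) ^ (t * s₂) := by
    have := g_anti d hd p hp0 hp1 s₂ (by omega) hps₂ t ht (s₁ - t)
    rwa [show t + (s₁ - t) = s₁ by omega] at this
  have step2 : ((t * d).choose t : ℝ) * ((s₂ * d).choose s₂ : ℝ) * (1 - p) ^ (t * s₂) ≤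
      ((t * d).choose t : ℝ) * ((t * d).choose t : ℝ) * (1 - p) ^ (t * t) := by
    have h := g_anti d hd p hp0 hp1 t ht (by exact hgt) t ht (s₂ - t)
    rw [show t + (s₂ - t) = s₂ by omega] at h
    calc ((t * d).choose t : ℝ) * ((s₂ * d).choose s₂ : ℝ) * (1 - p) ^ (t * s₂)
        = ((s₂ * d).choose s₂ : ℝ) * ((t * d).choose t : ℝ) * (1 - p) ^ (s₂ * t) := by
          rw [show t * s₂ = s₂ * t by ring]; ring
      _ ≤ ((t * d).choose t : ℝ) * ((t * d).choose t : ℝ) * (1 - p) ^ (t * t) := h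
  exact step1.trans step2
end
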